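/- arXiv:1902.04578 — 4 statements merged into one kernel-verified Lean document; each statement's English description precedes it below -/
import Mathlib

section
/- Let p ≥ 2 and p/2 ≤ r ≤ p. The map α ↦ λ_α(p,r) is nondecreasing and Lipschitz continuous on ℝ; quantitatively, for every α ∈ ℝ and every ε > 0 one has λ_α(p,r) ≤ λ_{α+ε}(p,r) ≤ λ_α(p,r) + 2^{(p−r)/r} ε. -/
open Set MeasureTheory intervalIntegral Real

noncomputable section

/-- `MemW0 p u g` : `u ∈ W_0^{1,p}(-1,1)` with (weak) derivative `g`, i.e. `u` is the
absolutely continuous primitive of `g ∈ L^p(-1,1)` vanishing at both endpoints. -/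
def MemW0 (p : ℝ) (u g : ℝ → ℝ) : Prop :=
  IntervalIntegrable g volume (-1) 1 ∧
  IntervalIntegrable (fun x => |g x| ^ p) volume (-1) 1 ∧
  (∀ x ∈ Icc (-1 : ℝ) 1, u x = ∫ t in (-1 : ℝ)..x, g t) ∧
  u 1 = 0

/-- The Rayleigh-type quotient `Q_α[u]` (here `g` stands for `u'`). -/
def QRay (p r α : ℝ) (u g : ℝ → ℝ) : ℝ :=
  ((∫ x in (-1 : ℝ)..1, |g x| ^ p) +
      α * |∫ x in (-1 : ℝ)..1, |u x| ^ (r - 1) * u x| ^ (p / r)) /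
    ∫ x in (-1 : ℝ)..1, |u x| ^ p

/-- `u ≢ 0` on `[-1,1]`. -/
def Nontriv (u : ℝ → ℝ) : Prop := ∃ x ∈ Icc (-1 : ℝ) 1, u x ≠ 0

/-- `λ_α(p,r)`, the infimum of the quotient `Q_α`. -/
def lam (p r α : ℝ) : ℝ :=
  sInf {v | ∃ u g, MemW0 p u g ∧ Nontriv u ∧ v = QRay p r α u g}

/-- `π_p`. -/
def pip (p : ℝ) : ℝ :=
  2 * ∫ t in (0 : ℝ)..(p - 1) ^ (1 / p), (1 - t ^ p / (p - 1)) ^ (-(1 / p))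

/-! For admissible `u`, the map `α ↦ Q_α[u]` is affine with slope `T / D`, where
`T = |∫ |u|^{r-1} u|^{p/r}` and `D = ∫ |u|^p`. The slope is nonnegative, and Hölder's inequality
on an interval of length `2` gives `T ≤ 2^{(p-r)/r} D`. So `λ_α` is the infimum of a family of
nondecreasing `2^{(p-r)/r}`-Lipschitz functions of `α` that is bounded below at `α = 0`, and such
an infimum is again nondecreasing and `2^{(p-r)/r}`-Lipschitz. -/

open scoped NNReal

theorem LipschitzWith.ciInf {α ι : Type*} [PseudoMetricSpace α] [Nonempty ι] {f : ι → α → ℝ}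
    {K : ℝ≥0} (hf : ∀ i, LipschitzWith K (f i)) (hbdd : ∀ x, BddBelow (range fun i => f i x)) :
    LipschitzWith K fun x => ⨅ i, f i x :=
  LipschitzWith.of_le_add_mul K fun x y => by
    rw [← sub_le_iff_le_add]
    refine le_ciInf fun i => sub_le_iff_le_add.2 ?_
    exact (ciInf_le (hbdd x) i).trans ((hf i).le_add_mul x y)

theorem Monotone.ciInf {α ι : Type*} [Preorder α] [Nonempty ι] {f : ι → α → ℝ}
    (hf : ∀ i, Monotone (f i)) (hbdd : ∀ x, BddBelow (range fun i => f i x)) :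
    Monotone fun x => ⨅ i, f i x :=
  fun _ _ hxy => ciInf_mono (hbdd _) fun i => hf i hxy

theorem LipschitzWith.bddBelow_range {α ι : Type*} [PseudoMetricSpace α] {f : ι → α → ℝ}
    {K : ℝ≥0} (hf : ∀ i, LipschitzWith K (f i)) {x₀ : α}
    (h₀ : BddBelow (range fun i => f i x₀)) (x : α) : BddBelow (range fun i => f i x) := by
  obtain ⟨m, hm⟩ := h₀
  refine ⟨m - K * dist x₀ x, ?_⟩
  rintro _ ⟨i, rfl⟩
  have hm₀ : m ≤ f i x₀ := hm ⟨i, rfl⟩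
  linarith [(hf i).le_add_mul x₀ x]

theorem intervalIntegral.integral_rpow_le_of_le {f : ℝ → ℝ} {a b p q : ℝ} (hab : a < b)
    (hq : 0 < q) (hqp : q ≤ p) (hf : ∀ x ∈ Icc a b, 0 ≤ f x)
    (hfq : IntervalIntegrable (fun x => f x ^ q) volume a b)
    (hfp : IntervalIntegrable (fun x => f x ^ p) volume a b)
    (hpos : 0 < ∫ x in a..b, f x ^ p) :
    ∫ x in a..b, f x ^ q ≤ (∫ x in a..b, f x ^ p) ^ (q / p) * (b - a) ^ (1 - q / p) := by
  set D := ∫ x in a..b, f x ^ p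
  set θ := q / p
  have hp : 0 < p := hq.trans_le hqp
  have hba : 0 < b - a := sub_pos.2 hab
  have hθ : θ ≤ 1 := (div_le_one hp).2 hqp
  set K := D ^ θ * (b - a) ^ (1 - θ)
  have hK : 0 < K := by positivity
  -- Young's inequality for the weights `θ, 1 - θ`, applied to `f^p / D` and `1 / (b - a)`
  have young : ∀ x ∈ Icc a b, f x ^ q / K ≤ θ / D * f x ^ p + (1 - θ) / (b - a) := by
    intro x hx
    have h := Real.geom_mean_le_arith_mean2_weighted (by positivity) (sub_nonneg.2 hθ)
      (div_nonneg (Real.rpow_nonneg (hf x hx) p) hpos.le) (one_div_nonneg.2 hba.le)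
      (add_sub_cancel θ 1)
    rw [Real.div_rpow (Real.rpow_nonneg (hf x hx) p) hpos.le, ← Real.rpow_mul (hf x hx),
      mul_div_cancel₀ q hp.ne', Real.div_rpow zero_le_one hba.le, Real.one_rpow] at h
    calc f x ^ q / K = f x ^ q / D ^ θ * (1 / (b - a) ^ (1 - θ)) := by
          rw [div_mul_div_comm, mul_one]
      _ ≤ θ * (f x ^ p / D) + (1 - θ) * (1 / (b - a)) := h
      _ = θ / D * f x ^ p + (1 - θ) / (b - a) := by ring
  have hint := integral_mono_on hab.le (hfq.div_const K)
    ((hfp.const_mul (θ / D)).add intervalIntegrable_const) young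
  rw [integral_div, integral_add (hfp.const_mul _) intervalIntegrable_const,
    integral_const_mul, integral_const, smul_eq_mul,
    div_mul_cancel₀ θ hpos.ne', mul_div_cancel₀ _ hba.ne', add_sub_cancel,
    div_le_one hK] at hint
  exact hint

theorem abs_abs_rpow_sub_one_mul_self {r : ℝ} (hr : r ≠ 0) (a : ℝ) :
    |(|a| ^ (r - 1) * a)| = |a| ^ r := by
  rw [abs_mul, abs_of_nonneg (Real.rpow_nonneg (abs_nonneg a) _)]
  calc |a| ^ (r - 1) * |a| = |a| ^ (r - 1) * |a| ^ (1 : ℝ) := by rw [Real.rpow_one]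
    _ = |a| ^ r := by rw [← Real.rpow_add' (abs_nonneg a) (by simpa using hr), sub_add_cancel]

theorem MemW0.continuousOn {p : ℝ} {u g : ℝ → ℝ} (hu : MemW0 p u g) :
    ContinuousOn u (Icc (-1) 1) := by
  have h11 : uIcc (-1 : ℝ) 1 = Icc (-1) 1 := uIcc_of_le (by norm_num)
  have hprim := continuousOn_primitive_interval' hu.1 (a := -1) (by simp)
  rw [h11] at hprim
  exact hprim.congr hu.2.2.1

theorem Nontriv.integral_rpow_abs_pos {p : ℝ} {u : ℝ → ℝ} (hu : Nontriv u)
    (hcont : ContinuousOn u (Icc (-1) 1)) (hp : 0 ≤ p) :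
    0 < ∫ x in (-1 : ℝ)..1, |u x| ^ p := by
  obtain ⟨x₀, hx₀, hux₀⟩ := hu
  exact integral_pos (by norm_num) (hcont.abs.rpow_const fun _ _ => Or.inr hp)
    (fun x _ => Real.rpow_nonneg (abs_nonneg _) p)
    ⟨x₀, hx₀, Real.rpow_pos_of_pos (abs_pos.2 hux₀) p⟩

theorem abs_integral_abs_rpow_sub_one_mul_rpow_le {p r : ℝ} {u : ℝ → ℝ}
    (hcont : ContinuousOn u (Icc (-1) 1)) (hu : Nontriv u) (hr : 0 < r) (hrp : r ≤ p) :
    |∫ x in (-1 : ℝ)..1, |u x| ^ (r - 1) * u x| ^ (p / r) ≤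
      (2 : ℝ) ^ ((p - r) / r) * ∫ x in (-1 : ℝ)..1, |u x| ^ p := by
  have hp : 0 < p := hr.trans_le hrp
  have hint : ∀ s : ℝ, 0 ≤ s → IntervalIntegrable (fun x => |u x| ^ s) volume (-1) 1 := fun s hs =>
    (hcont.abs.rpow_const (p := s) fun _ _ => Or.inr hs).intervalIntegrable_of_Icc (by norm_num)
  set D := ∫ x in (-1 : ℝ)..1, |u x| ^ p
  have hD := hu.integral_rpow_abs_pos hcont hp.le
  have hholder : |∫ x in (-1 : ℝ)..1, |u x| ^ (r - 1) * u x| ≤ D ^ (r / p) * 2 ^ (1 - r / p) :=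
    calc |∫ x in (-1 : ℝ)..1, |u x| ^ (r - 1) * u x|
        ≤ ∫ x in (-1 : ℝ)..1, |(|u x| ^ (r - 1) * u x)| :=
          abs_integral_le_integral_abs (by norm_num)
      _ = ∫ x in (-1 : ℝ)..1, |u x| ^ r := by
          simp only [abs_abs_rpow_sub_one_mul_self hr.ne']
      _ ≤ D ^ (r / p) * (1 - -1) ^ (1 - r / p) :=
          integral_rpow_le_of_le (by norm_num) hr hrp (fun _ _ => abs_nonneg _)
            (hint r hr.le) (hint p hp.le) hD
      _ = D ^ (r / p) * 2 ^ (1 - r / p) := by norm_num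
  calc |∫ x in (-1 : ℝ)..1, |u x| ^ (r - 1) * u x| ^ (p / r)
      ≤ (D ^ (r / p) * 2 ^ (1 - r / p)) ^ (p / r) := by gcongr
    _ = 2 ^ ((p - r) / r) * D := by
      have hexp₁ : r / p * (p / r) = 1 := by field_simp
      have hexp₂ : (1 - r / p) * (p / r) = (p - r) / r := by field_simp
      rw [Real.mul_rpow (by positivity) (by positivity), ← Real.rpow_mul hD.le,
        ← Real.rpow_mul zero_le_two, hexp₁, hexp₂, Real.rpow_one, mul_comm]

theorem QRay_eq_add_mul (p r α : ℝ) (u g : ℝ → ℝ) :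
    QRay p r α u g = QRay p r 0 u g +
      α * (|∫ x in (-1 : ℝ)..1, |u x| ^ (r - 1) * u x| ^ (p / r) /
        ∫ x in (-1 : ℝ)..1, |u x| ^ p) := by
  rw [QRay, QRay, zero_mul, add_zero, add_div, mul_div_assoc]

theorem QRay_zero_nonneg (p r : ℝ) (u g : ℝ → ℝ) : 0 ≤ QRay p r 0 u g := by
  rw [QRay, zero_mul, add_zero]
  exact div_nonneg (integral_nonneg (by norm_num) fun _ _ => Real.rpow_nonneg (abs_nonneg _) _)
    (integral_nonneg (by norm_num) fun _ _ => Real.rpow_nonneg (abs_nonneg _) _)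

theorem monotone_QRay (p r : ℝ) (u g : ℝ → ℝ) : Monotone fun α => QRay p r α u g := by
  intro α β hαβ
  dsimp only
  rw [QRay_eq_add_mul p r α, QRay_eq_add_mul p r β]
  gcongr
  exact div_nonneg (Real.rpow_nonneg (abs_nonneg _) _)
    (integral_nonneg (by norm_num) fun _ _ => Real.rpow_nonneg (abs_nonneg _) _)

theorem lipschitzWith_QRay {p r : ℝ} {u g : ℝ → ℝ} (hu : MemW0 p u g) (hnt : Nontriv u)
    (hr : 0 < r) (hrp : r ≤ p) :
    LipschitzWith (Real.toNNReal ((2 : ℝ) ^ ((p - r) / r))) fun α => QRay p r α u g := by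
  set s := |∫ x in (-1 : ℝ)..1, |u x| ^ (r - 1) * u x| ^ (p / r) / ∫ x in (-1 : ℝ)..1, |u x| ^ p
  have hD := hnt.integral_rpow_abs_pos hu.continuousOn (hr.le.trans hrp)
  have hs₀ : 0 ≤ s := div_nonneg (Real.rpow_nonneg (abs_nonneg _) _) hD.le
  have hs : s ≤ (2 : ℝ) ^ ((p - r) / r) :=
    (div_le_iff₀ hD).2 (abs_integral_abs_rpow_sub_one_mul_rpow_le hu.continuousOn hnt hr hrp)
  refine LipschitzWith.of_dist_le_mul fun α β => ?_
  rw [Real.coe_toNNReal _ (by positivity), Real.dist_eq, Real.dist_eq, QRay_eq_add_mul,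
    QRay_eq_add_mul p r β, add_sub_add_left_eq_sub, ← sub_mul, abs_mul, abs_of_nonneg hs₀,
    mul_comm]
  gcongr

def admissible (p : ℝ) : Set ((ℝ → ℝ) × (ℝ → ℝ)) := {w | MemW0 p w.1 w.2 ∧ Nontriv w.1}

theorem admissible_nonempty {p : ℝ} (hp : 0 ≤ p) : (admissible p).Nonempty := by
  refine ⟨(fun x => (1 - x ^ 2) / 2, fun x => -x), ⟨?_, ?_, ?_, by norm_num⟩, 0, by norm_num⟩
  · exact continuous_neg.intervalIntegrable _ _
  · exact ((continuous_abs.comp continuous_neg).rpow_const fun _ => Or.inr hp).intervalIntegrable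
      _ _
  · intro x _
    show (1 - x ^ 2) / 2 = ∫ t in (-1 : ℝ)..x, -t
    rw [intervalIntegral.integral_neg, integral_id]
    ring

theorem lam_eq_iInf (p r α : ℝ) : lam p r α = ⨅ w : admissible p, QRay p r α w.1.1 w.1.2 := by
  refine congrArg sInf (Set.ext fun v => ⟨?_, ?_⟩)
  · rintro ⟨u, g, hu, hnt, rfl⟩
    exact ⟨⟨(u, g), hu, hnt⟩, rfl⟩
  · rintro ⟨⟨⟨u, g⟩, hu, hnt⟩, rfl⟩
    exact ⟨u, g, hu, hnt, rfl⟩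

/-- `α ↦ λ_α(p,r)` is nondecreasing and Lipschitz, quantitatively. -/
theorem lam_monotone_lipschitz (p r : ℝ) (hp : 2 ≤ p) (hr1 : p / 2 ≤ r) (hr2 : r ≤ p) :
    Monotone (fun α => lam p r α) ∧
    LipschitzWith (Real.toNNReal ((2 : ℝ) ^ ((p - r) / r))) (fun α => lam p r α) ∧
    ∀ α ε : ℝ, 0 < ε →
      lam p r α ≤ lam p r (α + ε) ∧
      lam p r (α + ε) ≤ lam p r α + (2 : ℝ) ^ ((p - r) / r) * ε := by
  have hlam : (fun α => lam p r α) = fun α => ⨅ w : admissible p, QRay p r α w.1.1 w.1.2 :=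
    funext (lam_eq_iInf p r)
  have := (admissible_nonempty (by linarith : (0 : ℝ) ≤ p)).to_subtype
  have hlip (w : admissible p) := lipschitzWith_QRay w.2.1 w.2.2 (by linarith) hr2
  have hbdd := LipschitzWith.bddBelow_range hlip (x₀ := 0)
    ⟨0, by rintro _ ⟨w, rfl⟩; exact QRay_zero_nonneg p r _ _⟩
  have hmono : Monotone fun α => lam p r α :=
    hlam ▸ Monotone.ciInf (fun w => monotone_QRay p r _ _) hbdd
  have hL : LipschitzWith (Real.toNNReal ((2 : ℝ) ^ ((p - r) / r))) fun α => lam p r α :=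
    hlam ▸ LipschitzWith.ciInf hlip hbdd
  refine ⟨hmono, hL, fun α ε hε => ⟨hmono (by linarith), ?_⟩⟩
  have hstep := hL.le_add_mul (α + ε) α
  rwa [Real.coe_toNNReal _ (by positivity), Real.dist_eq, add_sub_cancel_left,
    abs_of_pos hε] at hstep
end
end

section
/- Let p ≥ 2. For every fixed m ∈ (0,1) and y ∈ [0,1), the function r ↦ h(m,p,r,y) is strictly increasing on the interval [p/2, p]. -/
open Set MeasureTheory intervalIntegral Real

noncomputable section

/-- `R(m,p,r) = (1-m^p)/(1+m^r)`. -/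
def Rfun (m p r : ℝ) : ℝ := (1 - m ^ p) / (1 + m ^ r)

/-- The auxiliary function `H(m,p,r)`. -/
def Hfun (m p r : ℝ) : ℝ :=
  (∫ y in (0 : ℝ)..1, (1 - Rfun m p r * (1 - y ^ r) - y ^ p) ^ (-(1 / p))) +
  ∫ y in (0 : ℝ)..1, m * (1 - Rfun m p r * (1 + m ^ r * y ^ r) - m ^ p * y ^ p) ^ (-(1 / p))

/-- The integrand `h(m,p,r,y)` defining `H`. -/
def hfun (m p r y : ℝ) : ℝ :=
  (1 - Rfun m p r * (1 - y ^ r) - y ^ p) ^ (-(1 / p)) +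
  m * (1 - Rfun m p r * (1 + m ^ r * y ^ r) - m ^ p * y ^ p) ^ (-(1 / p))

/-!
Put `S(r) = R(m,p,r) (1 - y^r)`. Since `1 - m^p = R (1 + m^r)`, the integrand becomes
`h = (1 - y^p - S)^(-1/p) + (1 - y^p + T)^(-1/p)` with `T = m^(r-p) S`, so
`p h' = S' (1 - y^p - S)^(-1/p-1) - T' (1 - y^p + T)^(-1/p-1)`. The first base is the
smaller one and `S' > 0`, so `h' > 0` follows from `T' < S'`. With `L = -log m`,
`T' = m^(r-p) (S' - L S)`, so `T' < S'` says `S' (1 - m^(p-r)) < L S`. The logarithmic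
derivative `S'/S` is below `1/r + L/2 ≤ 1/(p-r) + L/2` (here `r ≥ p/2` enters), and
`(1 - e^(-x)) (2 + x) ≤ 2x` for `x = (p-r) L ≥ 0`, i.e. `e^(-x) = m^(p-r)`, finishes the
comparison.
-/

lemma two_sub_le_two_add_mul_exp_neg {x : ℝ} (hx : 0 ≤ x) : 2 - x ≤ (2 + x) * exp (-x) := by
  let g : ℝ → ℝ := fun t => t + (2 + t) * exp (-t)
  have hg : ∀ t, HasDerivAt g (1 - (1 + t) * exp (-t)) t := fun t =>
    ((hasDerivAt_id' t).add (((hasDerivAt_id' t).const_add 2).mul (hasDerivAt_neg t).exp))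
      |>.congr_deriv (by ring)
  have hmono : MonotoneOn g (Ici 0) := by
    refine monotoneOn_of_deriv_nonneg (convex_Ici 0)
      (fun t _ => (hg t).continuousAt.continuousWithinAt)
      (fun t _ => (hg t).differentiableAt.differentiableWithinAt) fun t _ => ?_
    have : (1 + t) * exp (-t) ≤ 1 := calc
      (1 + t) * exp (-t) ≤ exp t * exp (-t) := by
        gcongr
        linarith [add_one_le_exp t]
      _ = 1 := by rw [← exp_add, add_neg_cancel, exp_zero]
    rw [(hg t).deriv]
    linarith
  have := hmono self_mem_Ici hx hx
  simp only [g, neg_zero, exp_zero] at this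
  linarith

lemma one_sub_exp_neg_mul_le {u L : ℝ} (hu : 0 < u) (hL : 0 ≤ L) :
    (1 - exp (-(u * L))) * (1 / u + L / 2) ≤ L := by
  have key := two_sub_le_two_add_mul_exp_neg (mul_nonneg hu.le hL)
  rw [show (1 - exp (-(u * L))) * (1 / u + L / 2) = (1 - exp (-(u * L))) * (2 + u * L) / (2 * u)
    by field_simp, div_le_iff₀ (by positivity)]
  linarith

lemma mul_rpow_mul_neg_log_le {y : ℝ} (hy : 0 ≤ y) (r : ℝ) :
    r * (y ^ r * -log y) ≤ 1 - y ^ r := by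
  rcases hy.eq_or_lt with rfl | hy
  · simpa using zero_rpow_le_one r
  · have := self_sub_one_le_mul_log (rpow_nonneg hy.le r)
    rw [log_rpow hy] at this
    linarith

lemma hasDerivAt_const_rpow_of_nonneg {a r : ℝ} (ha : 0 ≤ a) (hr : 0 < r) :
    HasDerivAt (fun x => a ^ x) (a ^ r * log a) r := by
  rcases ha.eq_or_lt with rfl | ha
  · have : (fun x : ℝ => (0 : ℝ) ^ x) =ᶠ[nhds r] fun _ => 0 := by
      filter_upwards [lt_mem_nhds hr] with x hx using zero_rpow hx.ne'
    simpa using (hasDerivAt_const r (0 : ℝ)).congr_of_eventuallyEq this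
  · exact (hasStrictDerivAt_const_rpow ha r).hasDerivAt

lemma mul_rpow_lt_mul_rpow_of_nonpos {X Y s t e : ℝ} (hX : 0 < X) (hXY : X ≤ Y) (he : e ≤ 0)
    (hs : 0 < s) (hts : t < s) : t * Y ^ e < s * X ^ e := by
  rcases le_or_gt t 0 with ht | ht
  · calc t * Y ^ e ≤ 0 := mul_nonpos_of_nonpos_of_nonneg ht (rpow_nonneg (hX.le.trans hXY) e)
      _ < s * X ^ e := mul_pos hs (rpow_pos_of_pos hX e)
  · calc t * Y ^ e ≤ t * X ^ e :=
        mul_le_mul_of_nonneg_left (rpow_le_rpow_of_nonpos hX hXY he) ht.le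
      _ < s * X ^ e := by gcongr

def Sfun (m p y r : ℝ) : ℝ := Rfun m p r * (1 - y ^ r)

def Sfun' (m p y r : ℝ) : ℝ :=
  Rfun m p r * ((1 - y ^ r) * (m ^ r * -log m / (1 + m ^ r)) + y ^ r * -log y)

def Tfun (m p y r : ℝ) : ℝ := m ^ (r - p) * Sfun m p y r

def hfunReparam (m p y r : ℝ) : ℝ :=
  (1 - y ^ p - Sfun m p y r) ^ (-(1 / p)) + (1 - y ^ p + Tfun m p y r) ^ (-(1 / p))

section

variable {m p y r : ℝ}

lemma one_sub_rpow_eq_Rfun_mul (hm : 0 ≤ m) : 1 - m ^ p = Rfun m p r * (1 + m ^ r) := by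
  rw [Rfun, div_mul_cancel₀ _ (by positivity)]

lemma hfun_eq (hm : 0 < m) (hp : p ≠ 0) (h : 0 ≤ 1 - y ^ p + Tfun m p y r) :
    hfun m p r y = hfunReparam m p y r := by
  have hsplit : m ^ r = m ^ p * m ^ (r - p) := by rw [← rpow_add hm]; ring_nf
  have hfirst : 1 - Rfun m p r * (1 - y ^ r) - y ^ p = 1 - y ^ p - Sfun m p y r := by
    rw [Sfun]; ring
  have hsecond : 1 - Rfun m p r * (1 + m ^ r * y ^ r) - m ^ p * y ^ p =
      m ^ p * (1 - y ^ p + Tfun m p y r) := by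
    rw [Tfun, Sfun]
    linear_combination one_sub_rpow_eq_Rfun_mul (r := r) hm.le +
      Rfun m p r * (1 - y ^ r) * hsplit
  rw [hfun, hfunReparam, hfirst, hsecond, mul_rpow (by positivity) h, ← rpow_mul hm.le, mul_neg,
    mul_one_div_cancel hp, rpow_neg_one]
  field_simp

lemma Rfun_pos (hm0 : 0 ≤ m) (hm1 : m < 1) (hp : 0 < p) : 0 < Rfun m p r :=
  div_pos (sub_pos.2 (rpow_lt_one hm0 hm1 hp)) (by positivity)

lemma Rfun_lt_one (hm : 0 < m) : Rfun m p r < 1 := by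
  rw [Rfun, div_lt_one (by positivity)]
  linarith [rpow_pos_of_pos hm p, rpow_pos_of_pos hm r]

lemma Sfun_pos (hm0 : 0 ≤ m) (hm1 : m < 1) (hp : 0 < p) (hy0 : 0 ≤ y) (hy1 : y < 1)
    (hr : 0 < r) : 0 < Sfun m p y r :=
  mul_pos (Rfun_pos hm0 hm1 hp) (sub_pos.2 (rpow_lt_one hy0 hy1 hr))

lemma Tfun_pos (hm0 : 0 < m) (hm1 : m < 1) (hp : 0 < p) (hy0 : 0 ≤ y) (hy1 : y < 1)
    (hr : 0 < r) : 0 < Tfun m p y r :=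
  mul_pos (rpow_pos_of_pos hm0 _) (Sfun_pos hm0.le hm1 hp hy0 hy1 hr)

lemma Sfun_lt_one_sub_rpow (hm : 0 < m) (hy0 : 0 ≤ y) (hy1 : y < 1) (hr : 0 < r) (hrp : r ≤ p) :
    Sfun m p y r < 1 - y ^ p := calc
  Sfun m p y r < 1 - y ^ r :=
    mul_lt_of_lt_one_left (sub_pos.2 (rpow_lt_one hy0 hy1 hr)) (Rfun_lt_one hm)
  _ ≤ 1 - y ^ p := sub_le_sub_left (rpow_le_rpow_of_exponent_ge' hy0 hy1.le hr.le hrp) 1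

lemma hasDerivAt_Rfun (hm : 0 < m) :
    HasDerivAt (Rfun m p) (Rfun m p r * (m ^ r * -log m / (1 + m ^ r))) r := by
  have hden := (hasStrictDerivAt_const_rpow hm r).hasDerivAt.const_add 1
  refine ((hasDerivAt_const r (1 - m ^ p)).div hden (by positivity)).congr_deriv ?_
  rw [Rfun]
  field_simp
  ring

lemma hasDerivAt_Sfun (hm : 0 < m) (hy : 0 ≤ y) (hr : 0 < r) :
    HasDerivAt (Sfun m p y) (Sfun' m p y r) r := by
  refine ((hasDerivAt_Rfun hm).mul
    ((hasDerivAt_const_rpow_of_nonneg hy hr).const_sub 1)).congr_deriv ?_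
  rw [Sfun']
  ring

lemma hasDerivAt_Tfun (hm : 0 < m) (hy : 0 ≤ y) (hr : 0 < r) :
    HasDerivAt (Tfun m p y) (m ^ (r - p) * (Sfun' m p y r + log m * Sfun m p y r)) r := by
  have hpow : HasDerivAt (fun r => m ^ (r - p)) (m ^ (r - p) * log m) r :=
    (hasStrictDerivAt_const_rpow hm (r - p)).hasDerivAt.comp_sub_const r p
  exact (hpow.mul (hasDerivAt_Sfun hm hy hr)).congr_deriv (by ring)

lemma Sfun'_pos (hm0 : 0 < m) (hm1 : m < 1) (hp : 0 < p) (hy0 : 0 ≤ y) (hy1 : y < 1)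
    (hr : 0 < r) : 0 < Sfun' m p y r := by
  have hL : 0 < -log m := neg_pos.2 (log_neg hm0 hm1)
  have hfirst : 0 < (1 - y ^ r) * (m ^ r * -log m / (1 + m ^ r)) :=
    mul_pos (sub_pos.2 (rpow_lt_one hy0 hy1 hr)) (by positivity)
  have hsecond : 0 ≤ y ^ r * -log y :=
    mul_nonneg (rpow_nonneg hy0 r) (neg_nonneg.2 (log_nonpos hy0 hy1.le))
  exact mul_pos (Rfun_pos hm0.le hm1 hp) (add_pos_of_pos_of_nonneg hfirst hsecond)

lemma Sfun'_lt_Sfun_mul (hm0 : 0 < m) (hm1 : m < 1) (hp : 0 < p) (hy0 : 0 ≤ y) (hy1 : y < 1)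
    (hr : 0 < r) : Sfun' m p y r < Sfun m p y r * (1 / r + -log m / 2) := by
  have hL : 0 < -log m := neg_pos.2 (log_neg hm0 hm1)
  have hyr : 0 < 1 - y ^ r := sub_pos.2 (rpow_lt_one hy0 hy1 hr)
  have hmr : m ^ r < 1 := rpow_lt_one hm0.le hm1 hr
  have hy : y ^ r * -log y ≤ (1 - y ^ r) * (1 / r) := by
    rw [mul_one_div, le_div_iff₀ hr]
    linarith [mul_rpow_mul_neg_log_le hy0 r]
  have hm : m ^ r * -log m / (1 + m ^ r) < -log m / 2 := by
    rw [div_lt_div_iff₀ (by positivity) two_pos]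
    nlinarith
  rw [Sfun', Sfun, mul_assoc]
  refine mul_lt_mul_of_pos_left ?_ (Rfun_pos hm0.le hm1 hp)
  nlinarith

lemma Tfun_deriv_lt_Sfun' (hm0 : 0 < m) (hm1 : m < 1) (hy0 : 0 ≤ y) (hy1 : y < 1)
    (hr : p / 2 ≤ r) (hrp : r < p) :
    m ^ (r - p) * (Sfun' m p y r + log m * Sfun m p y r) < Sfun' m p y r := by
  have hr0 : 0 < r := by linarith
  have hu : 0 < p - r := sub_pos.2 hrp
  have hL : 0 < -log m := neg_pos.2 (log_neg hm0 hm1)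
  have hw : m ^ (p - r) = exp (-((p - r) * -log m)) := by rw [rpow_def_of_pos hm0]; ring_nf
  have hw1 : 0 < 1 - m ^ (p - r) := sub_pos.2 (rpow_lt_one hm0.le hm1 hu)
  have hS := Sfun_pos (p := p) (y := y) hm0.le hm1 (by linarith) hy0 hy1 hr0
  have key : Sfun' m p y r * (1 - m ^ (p - r)) < -log m * Sfun m p y r := calc
    Sfun' m p y r * (1 - m ^ (p - r))
      < Sfun m p y r * (1 / r + -log m / 2) * (1 - m ^ (p - r)) :=
        mul_lt_mul_of_pos_right (Sfun'_lt_Sfun_mul hm0 hm1 (by linarith) hy0 hy1 hr0) hw1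
    _ ≤ Sfun m p y r * ((1 - m ^ (p - r)) * (1 / (p - r) + -log m / 2)) := by
        rw [mul_assoc, mul_comm (1 / r + _)]
        gcongr
        linarith
    _ ≤ Sfun m p y r * -log m := by
        gcongr
        rw [hw]
        exact one_sub_exp_neg_mul_le hu hL.le
    _ = -log m * Sfun m p y r := mul_comm _ _
  rw [show r - p = -(p - r) by ring, rpow_neg hm0.le, inv_mul_lt_iff₀ (rpow_pos_of_pos hm0 _)]
  linarith

lemma hasDerivAt_hfunReparam (hm : 0 < m) (hy : 0 ≤ y) (hr : 0 < r)
    (hX : 0 < 1 - y ^ p - Sfun m p y r) (hY : 0 < 1 - y ^ p + Tfun m p y r) :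
    HasDerivAt (hfunReparam m p y)
      (1 / p * (Sfun' m p y r * (1 - y ^ p - Sfun m p y r) ^ (-(1 / p) - 1) -
        m ^ (r - p) * (Sfun' m p y r + log m * Sfun m p y r) *
          (1 - y ^ p + Tfun m p y r) ^ (-(1 / p) - 1))) r := by
  have hXS := ((hasDerivAt_Sfun hm hy hr).const_sub (1 - y ^ p)).rpow_const
    (p := -(1 / p)) (Or.inl hX.ne')
  have hYT := ((hasDerivAt_Tfun hm hy hr).const_add (1 - y ^ p)).rpow_const
    (p := -(1 / p)) (Or.inl hY.ne')
  exact (hXS.add hYT).congr_deriv (by ring)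

lemma strictMonoOn_hfunReparam (hp : 0 < p) (hm0 : 0 < m) (hm1 : m < 1) (hy0 : 0 ≤ y)
    (hy1 : y < 1) : StrictMonoOn (hfunReparam m p y) (Icc (p / 2) p) := by
  have hbases : ∀ r ∈ Icc (p / 2) p, 0 < r ∧ 0 < 1 - y ^ p - Sfun m p y r ∧
      1 - y ^ p - Sfun m p y r < 1 - y ^ p + Tfun m p y r := by
    rintro r ⟨hr, hrp⟩
    have hr0 : 0 < r := by linarith
    exact ⟨hr0, sub_pos.2 (Sfun_lt_one_sub_rpow hm0 hy0 hy1 hr0 hrp),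
      by linarith [Sfun_pos hm0.le hm1 hp hy0 hy1 hr0, Tfun_pos hm0 hm1 hp hy0 hy1 hr0]⟩
  refine strictMonoOn_of_deriv_pos (convex_Icc _ _) (fun r hr => ?_) fun r hr => ?_
  · obtain ⟨hr0, hX, hXY⟩ := hbases r hr
    exact (hasDerivAt_hfunReparam hm0 hy0 hr0 hX (hX.trans hXY)).continuousAt.continuousWithinAt
  rw [interior_Icc] at hr
  obtain ⟨hr0, hX, hXY⟩ := hbases r (Ioo_subset_Icc_self hr)
  rw [(hasDerivAt_hfunReparam hm0 hy0 hr0 hX (hX.trans hXY)).deriv]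
  have he : -(1 / p) - 1 ≤ 0 := by linarith [one_div_pos.2 hp]
  exact mul_pos (one_div_pos.2 hp) (sub_pos.2 (mul_rpow_lt_mul_rpow_of_nonpos hX hXY.le he
    (Sfun'_pos hm0 hm1 hp hy0 hy1 hr0) (Tfun_deriv_lt_Sfun' hm0 hm1 hy0 hy1 hr.1.le hr.2)))

end

/-- `r ↦ h(m,p,r,y)` is strictly increasing on `[p/2, p]`. -/
theorem hfun_strictMonoOn (p : ℝ) (hp : 2 ≤ p) (m : ℝ) (hm : m ∈ Ioo (0 : ℝ) 1)
    (y : ℝ) (hy : y ∈ Ico (0 : ℝ) 1) :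
    StrictMonoOn (fun r => hfun m p r y) (Icc (p / 2) p) := by
  obtain ⟨hm0, hm1⟩ := hm
  obtain ⟨hy0, hy1⟩ := hy
  have hp0 : 0 < p := by linarith
  refine (strictMonoOn_hfunReparam hp0 hm0 hm1 hy0 hy1).congr fun r ⟨hr, _⟩ => ?_
  have hT := Tfun_pos hm0 hm1 hp0 hy0 hy1 (r := r) (by linarith)
  have hyp := rpow_le_one hy0 hy1.le hp0.le
  exact (hfun_eq hm0 hp0.ne' (by linarith)).symm
end
end

section
/- Let p ≥ 2. For every m ∈ (0,1) and every r ∈ [p/2, p], one has μ(m,r) := (m^r + m^{r−p})·log(1/m) + (1/r)·(1 + m^r − m^{r−p} − m^{2r−p}) > 0; equivalently, for r < p, (m^r + m^{r−p})·log(m) / ((1 + m^r)(1 − m^{r−p})) > 1/r. -/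
open Set MeasureTheory intervalIntegral Real

noncomputable section

/-! With `a = m ^ r` and `b = m ^ (r - p)` one has `m ^ (2r - p) = a b`, so
`r μ(m,r) = (a + b) log (1/a) + (1 + a)(1 - b)`. This is affine in `b`, and the constraints
`p/2 ≤ r ≤ p` say exactly that `1 ≤ b ≤ 1/a`. At `b = 1` it is `(1 + a) log (1/a) > 0`; at
`b = 1/a`, writing `a = e^{-x}`, it is `2 (x cosh x - sinh x) > 0`. The second claim is the
first one divided by `(1 + m ^ r)(1 - m ^ (r - p)) < 0`. -/

theorem Real.sinh_lt_mul_cosh {x : ℝ} (hx : 0 < x) : sinh x < x * cosh x := by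
  have hderiv (t : ℝ) : HasDerivAt (fun t => t * cosh t - sinh t) (t * sinh t) t :=
    (((hasDerivAt_id' t).mul (hasDerivAt_cosh t)).sub (hasDerivAt_sinh t)).congr_deriv
      (by ring)
  have hmono : StrictMonoOn (fun t => t * cosh t - sinh t) (Ici 0) := by
    refine strictMonoOn_of_deriv_pos (convex_Ici 0) (by fun_prop) fun t ht => ?_
    rw [interior_Ici] at ht
    rw [(hderiv t).deriv]
    exact mul_pos ht (sinh_pos_iff.2 ht)
  have := hmono self_mem_Ici hx.le hx
  simp only [zero_mul, sinh_zero, sub_zero] at this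
  linarith

theorem Real.inv_sub_self_lt_mul_log_inv {a : ℝ} (ha0 : 0 < a) (ha1 : a < 1) :
    a⁻¹ - a < (a + a⁻¹) * log a⁻¹ := by
  have hx : 0 < log a⁻¹ := log_pos ((one_lt_inv₀ ha0).2 ha1)
  have hexp : exp (log a⁻¹) = a⁻¹ := exp_log (inv_pos.2 ha0)
  have hexp_neg : exp (-log a⁻¹) = a := by rw [exp_neg, hexp, inv_inv]
  have := sinh_lt_mul_cosh hx
  rw [sinh_eq, cosh_eq, hexp, hexp_neg] at this
  linarith

theorem Real.add_mul_log_inv_add_mul_one_sub_pos {a b : ℝ} (ha0 : 0 < a) (ha1 : a < 1)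
    (hb : 1 ≤ b) (hab : a * b ≤ 1) :
    0 < (a + b) * log a⁻¹ + (1 + a) * (1 - b) := by
  have hlog : 0 < log a⁻¹ := log_pos ((one_lt_inv₀ ha0).2 ha1)
  have hend := inv_sub_self_lt_mul_log_inv ha0 ha1
  have haa : a * a⁻¹ = 1 := mul_inv_cancel₀ ha0.ne'
  -- affine in `b` with slope `log a⁻¹ - (1 + a)`: compare with `b = 1` or with `b = 1/a`
  rcases le_total (1 + a) (log a⁻¹) with hc | hc
  · nlinarith [mul_nonneg (sub_nonneg.2 hb) (sub_nonneg.2 hc)]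
  · nlinarith [mul_nonneg (sub_nonneg.2 hab) (sub_nonneg.2 hc), mul_pos ha0 hlog]

/-- positivity of `μ(m,r)` and the equivalent logarithmic inequality. -/
theorem mu_pos (p m r : ℝ) (hp : 2 ≤ p) (hm : m ∈ Ioo (0 : ℝ) 1)
    (hr1 : p / 2 ≤ r) (hr2 : r ≤ p) :
    0 < (m ^ r + m ^ (r - p)) * Real.log (1 / m) +
        (1 / r) * (1 + m ^ r - m ^ (r - p) - m ^ (2 * r - p)) ∧
    (r < p →
      1 / r < (m ^ r + m ^ (r - p)) * Real.log m /
        ((1 + m ^ r) * (1 - m ^ (r - p)))) := by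
  obtain ⟨hm0, hm1⟩ := hm
  have hr : 0 < r := by linarith
  have ha1 : m ^ r < 1 := rpow_lt_one hm0.le hm1 hr
  have hb : 1 ≤ m ^ (r - p) := one_le_rpow_of_pos_of_le_one_of_nonpos hm0 hm1.le (by linarith)
  have hab : m ^ (2 * r - p) = m ^ r * m ^ (r - p) := by
    rw [← rpow_add hm0]; ring_nf
  have hlog : log (m ^ r)⁻¹ = r * log (1 / m) := by
    rw [← inv_rpow hm0.le, log_rpow (inv_pos.2 hm0), one_div]
  have key := add_mul_log_inv_add_mul_one_sub_pos (rpow_pos_of_pos hm0 r) ha1 hb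
    (hab ▸ rpow_le_one hm0.le hm1.le (by linarith))
  have hμ : 0 < (m ^ r + m ^ (r - p)) * log (1 / m) +
      (1 / r) * (1 + m ^ r - m ^ (r - p) - m ^ (2 * r - p)) := by
    rw [hlog] at key
    have hμr : (m ^ r + m ^ (r - p)) * log (1 / m) +
        (1 / r) * (1 + m ^ r - m ^ (r - p) - m ^ (2 * r - p)) =
        ((m ^ r + m ^ (r - p)) * (r * log (1 / m)) + (1 + m ^ r) * (1 - m ^ (r - p))) / r := by
      rw [hab]; field_simp; ring
    exact hμr ▸ div_pos key hr
  refine ⟨hμ, fun hrp => ?_⟩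
  have hb1 : 1 < m ^ (r - p) := one_lt_rpow_of_pos_of_lt_one_of_neg hm0 hm1 (by linarith)
  have hden : (1 + m ^ r) * (1 - m ^ (r - p)) < 0 :=
    mul_neg_of_pos_of_neg (by positivity) (by linarith)
  rw [lt_div_iff_of_neg hden]
  rw [one_div m, log_inv, hab] at hμ
  linarith
end
end

section
/- Let p ≥ 2. For every m ∈ [0,1], H(m, p, p/2) = π_p/(p−1)^{1/p}; that is, the function m ↦ H(m,p,p/2) is constant on [0,1]. -/
open Set MeasureTheory intervalIntegral Real

noncomputable section

/-! Put `q = 1/p` and `a = m^(p/2)`. Then `R(m,p,p/2) = 1 - a`, both integrands of `H` factor, and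
the substitution `y = v^(2/p)` gives `H = (2/p) (J(a) + J(1/a))`, where
`J(c) = ∫₀¹ v^(2q-1) ((1-v)(v+c))^(-q) dv` (`shiftedBeta q c`).  With `a = (1-b)/(1+b)`, the Möbius
substitution `v = (1-b)z/(1-bz)` of `(0,1)` turns `J(a)` and `J(1/a)` into integrals of the same
kernel `z^(2q-1) (1-z²)^(-q)` against `(1-bz)⁻¹` and `(1+bz)⁻¹`, both with the factor `(1-b²)^q`.
Their sum has weight `2 (1-b²z²)⁻¹`, so `z = √u` and Euler's transformation
`∫₀¹ u^(s-1) (1-u)^(t-1) (1-Lu)^(-(s+t)) du = (1-L)^(-s) B(s,t)` give `J(a) + J(1/a) = B(q, 1-q)`,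
independently of `a` (for `m = 0` only `J(0) = B(q, 1-q)` remains).  Scaling `t = (p-1)^(1/p) x`
and then `x = u^(1/p)` in `π_p` gives `π_p / (p-1)^(1/p) = (2/p) B(q, 1-q)` as well. -/

theorem setIntegral_Ioo_eq_integral_abs_deriv_mul {f f' : ℝ → ℝ} (hf : f '' Ioo 0 1 = Ioo 0 1)
    (hf' : ∀ x ∈ Ioo (0 : ℝ) 1, HasDerivWithinAt f (f' x) (Ioo 0 1) x)
    (hinj : InjOn f (Ioo 0 1)) (g : ℝ → ℝ) :
    ∫ x in Ioo (0 : ℝ) 1, g x = ∫ x in Ioo (0 : ℝ) 1, |f' x| * g (f x) := by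
  simpa only [hf, smul_eq_mul] using
    integral_image_eq_integral_abs_deriv_smul measurableSet_Ioo hf' hinj g

theorem setIntegral_Ioo_comp_rpow {e : ℝ} (he : 0 < e) (g : ℝ → ℝ) :
    ∫ x in Ioo (0 : ℝ) 1, g (x ^ e) = e⁻¹ * ∫ v in Ioo (0 : ℝ) 1, v ^ (e⁻¹ - 1) * g v := by
  have hroot : ∀ v ∈ Ioo (0 : ℝ) 1, (v ^ e⁻¹) ^ e = v := fun v hv => by
    rw [← rpow_mul hv.1.le, inv_mul_cancel₀ he.ne', rpow_one]
  have himage : (· ^ e) '' Ioo (0 : ℝ) 1 = Ioo 0 1 := by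
    refine Subset.antisymm ?_ fun v hv => ⟨v ^ e⁻¹, ⟨by have := hv.1; positivity,
      rpow_lt_one hv.1.le hv.2 (inv_pos.2 he)⟩, hroot v hv⟩
    rintro _ ⟨x, hx, rfl⟩
    exact ⟨rpow_pos_of_pos hx.1 e, rpow_lt_one hx.1.le hx.2 he⟩
  have hinj : InjOn (· ^ e) (Ioo (0 : ℝ) 1) := fun x hx y hy hxy => by
    simpa only [← rpow_mul hx.1.le, ← rpow_mul hy.1.le, mul_inv_cancel₀ he.ne', rpow_one]
      using congrArg (· ^ e⁻¹) hxy
  rw [setIntegral_Ioo_eq_integral_abs_deriv_mul himage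
    (fun x hx => (hasDerivAt_rpow_const (Or.inl hx.1.ne')).hasDerivWithinAt) hinj
    (fun v => v ^ (e⁻¹ - 1) * g v), ← MeasureTheory.integral_const_mul]
  refine setIntegral_congr_fun measurableSet_Ioo fun x hx => ?_
  have hx0 := hx.1
  have hjac : e⁻¹ * (e * x ^ (e - 1)) * x ^ (1 - e) = 1 := by
    rw [← mul_assoc, inv_mul_cancel₀ he.ne', one_mul, ← rpow_add hx0]
    simp
  rw [abs_of_pos (by positivity), ← rpow_mul hx0.le, mul_sub, mul_inv_cancel₀ he.ne', mul_one,
    ← mul_assoc, ← mul_assoc, hjac, one_mul]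

theorem one_add_sub_one_mul_pos {c x : ℝ} (hc : 0 < c) (hx : x ∈ Icc (0 : ℝ) 1) :
    0 < 1 + (c - 1) * x := by
  nlinarith [mul_nonneg hc.le hx.1, hx.2]

theorem image_mobius_Ioo {c : ℝ} (hc : 0 < c) :
    (fun x => c * x / (1 + (c - 1) * x)) '' Ioo (0 : ℝ) 1 = Ioo 0 1 := by
  apply Subset.antisymm
  · rintro _ ⟨x, hx, rfl⟩
    have hd := one_add_sub_one_mul_pos hc (Ioo_subset_Icc_self hx)
    exact ⟨div_pos (mul_pos hc hx.1) hd, (div_lt_one hd).2 (by nlinarith [hx.2])⟩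
  · intro y hy
    have hd : 0 < c + (1 - c) * y := by nlinarith [mul_pos hc (sub_pos.2 hy.2), hy.1]
    refine ⟨y / (c + (1 - c) * y), ⟨div_pos hy.1 hd, (div_lt_one hd).2 ?_⟩, ?_⟩
    · nlinarith [mul_pos hc (sub_pos.2 hy.2), hy.1]
    · have hd' : 1 + (c - 1) * (y / (c + (1 - c) * y)) = c / (c + (1 - c) * y) := by
        rw [eq_div_iff hd.ne', add_mul, mul_assoc, div_mul_cancel₀ _ hd.ne']
        ring
      change c * _ / _ = y
      rw [hd']
      field_simp
      exact mul_div_cancel_right₀ y (by linarith : 0 < c + y * (1 - c)).ne'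

theorem setIntegral_Ioo_comp_mobius {c : ℝ} (hc : 0 < c) (g : ℝ → ℝ) :
    ∫ x in Ioo (0 : ℝ) 1, g x =
      ∫ x in Ioo (0 : ℝ) 1, c / (1 + (c - 1) * x) ^ 2 * g (c * x / (1 + (c - 1) * x)) := by
  have hden : ∀ x ∈ Ioo (0 : ℝ) 1, 0 < 1 + (c - 1) * x := fun x hx =>
    one_add_sub_one_mul_pos hc (Ioo_subset_Icc_self hx)
  have hderiv : ∀ x ∈ Ioo (0 : ℝ) 1, HasDerivWithinAt (fun x => c * x / (1 + (c - 1) * x))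
      (c / (1 + (c - 1) * x) ^ 2) (Ioo 0 1) x := fun x hx => by
    have hd := hden x hx
    have hnum : HasDerivAt (fun x => c * x) c x := by simpa using (hasDerivAt_id x).const_mul c
    have hdenom : HasDerivAt (fun x => 1 + (c - 1) * x) (c - 1) x := by
      simpa using ((hasDerivAt_id x).const_mul (c - 1)).const_add 1
    rw [show c / (1 + (c - 1) * x) ^ 2
      = (c * (1 + (c - 1) * x) - c * x * (c - 1)) / (1 + (c - 1) * x) ^ 2 by ring]
    exact (hnum.div hdenom hd.ne').hasDerivWithinAt
  have hinj : InjOn (fun x => c * x / (1 + (c - 1) * x)) (Ioo 0 1) := fun x hx y hy hxy => by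
    rw [div_eq_div_iff (hden x hx).ne' (hden y hy).ne'] at hxy
    exact mul_left_cancel₀ hc.ne' (by linear_combination hxy)
  rw [setIntegral_Ioo_eq_integral_abs_deriv_mul (image_mobius_Ioo hc) hderiv hinj]
  refine setIntegral_congr_fun measurableSet_Ioo fun x hx => ?_
  have hd := hden x hx
  rw [abs_of_pos (by positivity)]

theorem integrableOn_Ioo_rpow_mul_one_sub_rpow_mul {s t : ℝ} (hs : -1 < s) (ht : -1 < t)
    {g : ℝ → ℝ} (hg : ContinuousOn g (Icc 0 1)) :
    IntegrableOn (fun z => z ^ s * (1 - z) ^ t * g z) (Ioo 0 1) := by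
  have hleft : IntervalIntegrable (fun z => z ^ s * ((1 - z) ^ t * g z)) volume 0 (1 / 2) := by
    refine (intervalIntegrable_rpow' hs).mul_continuousOn
      (((continuousOn_const.sub continuousOn_id).rpow_const fun z hz => Or.inl ?_).mul
        (hg.mono ?_))
    · rw [uIcc_of_le (by norm_num)] at hz
      simp only [Pi.sub_apply, id]
      linarith [hz.2]
    · rw [uIcc_of_le (by norm_num)]
      exact Icc_subset_Icc_right (by norm_num)
  have hright : IntervalIntegrable (fun z => (1 - z) ^ t * (z ^ s * g z)) volume (1 / 2) 1 := by
    have h := (intervalIntegrable_rpow' ht (a := 1 / 2) (b := 0)).comp_sub_left 1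
    rw [show (1 : ℝ) - 1 / 2 = 1 / 2 by norm_num, sub_zero] at h
    refine h.mul_continuousOn ((continuousOn_id.rpow_const fun z hz => Or.inl ?_).mul (hg.mono ?_))
    · rw [uIcc_of_le (by norm_num)] at hz
      simp only [id]
      linarith [hz.1]
    · rw [uIcc_of_le (by norm_num)]
      exact Icc_subset_Icc_left (by norm_num)
  have hwhole := hleft.trans ((intervalIntegrable_congr fun z _ => by ring).mp hright)
  rw [intervalIntegrable_iff_integrableOn_Ioo_of_le zero_le_one] at hwhole
  exact hwhole.congr_fun (fun z _ => by ring) measurableSet_Ioo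

def betaIoo (s t : ℝ) : ℝ := ∫ v in Ioo (0 : ℝ) 1, v ^ (s - 1) * (1 - v) ^ (t - 1)

theorem setIntegral_Ioo_euler_transform {s t L : ℝ} (hL : L < 1) :
    ∫ u in Ioo (0 : ℝ) 1, u ^ (s - 1) * (1 - u) ^ (t - 1) * (1 - L * u) ^ (-(s + t)) =
      (1 - L) ^ (-s) * betaIoo s t := by
  have hL' : 0 < 1 - L := sub_pos.2 hL
  have hc : 0 < (1 - L)⁻¹ := inv_pos.2 hL'
  rw [setIntegral_Ioo_comp_mobius hc, betaIoo, ← MeasureTheory.integral_const_mul]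
  refine setIntegral_congr_fun measurableSet_Ioo fun w hw => ?_
  have hw0 : 0 < w := hw.1
  have hw1 : 0 < 1 - w := sub_pos.2 hw.2
  have hD : 0 < 1 + ((1 - L)⁻¹ - 1) * w := by nlinarith [mul_pos hc hw0]
  have h1 : 1 - (1 - L)⁻¹ * w / (1 + ((1 - L)⁻¹ - 1) * w)
      = (1 - w) / (1 + ((1 - L)⁻¹ - 1) * w) := by
    rw [eq_div_iff hD.ne', sub_mul, div_mul_cancel₀ _ hD.ne']
    ring
  have h2 : 1 - L * ((1 - L)⁻¹ * w / (1 + ((1 - L)⁻¹ - 1) * w))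
      = 1 / (1 + ((1 - L)⁻¹ - 1) * w) := by
    rw [eq_div_iff hD.ne', sub_mul, mul_div_assoc', div_mul_cancel₀ _ hD.ne']
    linear_combination w * inv_mul_cancel₀ hL'.ne'
  rw [h1, h2]
  refine Real.log_injOn_pos (mem_Ioi.2 (by positivity)) (mem_Ioi.2 (by positivity)) ?_
  simp (disch := positivity) only [log_mul, log_div, log_inv, log_rpow, log_pow, log_one]
  ring

theorem setIntegral_Ioo_sq_euler_transform {s t L : ℝ} (hL : L < 1) :
    ∫ z in Ioo (0 : ℝ) 1, z ^ (2 * s - 1) * (1 - z ^ 2) ^ (t - 1) * (1 - L * z ^ 2) ^ (-(s + t)) =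
      2⁻¹ * ((1 - L) ^ (-s) * betaIoo s t) := by
  have hsq : ∀ z ∈ Ioo (0 : ℝ) 1,
      z ^ (2 * s - 1) * (1 - z ^ 2) ^ (t - 1) * (1 - L * z ^ 2) ^ (-(s + t)) =
        (z ^ (2 : ℝ)) ^ (s - 2⁻¹) * (1 - z ^ (2 : ℝ)) ^ (t - 1) *
          (1 - L * z ^ (2 : ℝ)) ^ (-(s + t)) := fun z hz => by
    rw [← rpow_mul hz.1.le, rpow_two]
    ring_nf
  rw [setIntegral_congr_fun measurableSet_Ioo hsq, setIntegral_Ioo_comp_rpow two_pos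
    (fun u => u ^ (s - 2⁻¹) * (1 - u) ^ (t - 1) * (1 - L * u) ^ (-(s + t))),
    ← setIntegral_Ioo_euler_transform hL]
  congr 1
  refine setIntegral_congr_fun measurableSet_Ioo fun u hu => ?_
  rw [← mul_assoc, ← mul_assoc, ← rpow_add hu.1]
  ring_nf

theorem one_sub_mul_pos {β z : ℝ} (hβ : β ∈ Ioo (-1 : ℝ) 1) (hz : z ∈ Icc (0 : ℝ) 1) :
    0 < 1 - β * z := by
  nlinarith [hz.1, hz.2, hβ.1, hβ.2]

def shiftedBeta (q c : ℝ) : ℝ :=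
  ∫ v in Ioo (0 : ℝ) 1, v ^ (2 * q - 1) * ((1 - v) * (v + c)) ^ (-q)

theorem shiftedBeta_eq_mobius {b : ℝ} (hb : b ∈ Ioo (-1 : ℝ) 1) (q : ℝ) :
    shiftedBeta q ((1 - b) / (1 + b)) =
      (1 - b ^ 2) ^ q * ∫ z in Ioo (0 : ℝ) 1,
        z ^ (2 * q - 1) * (1 - z) ^ (-q) * ((1 + z) ^ (-q) * (1 - b * z)⁻¹) := by
  have hb1 : 0 < 1 - b := sub_pos.2 hb.2
  have hb2 : 0 < 1 + b := by linarith [hb.1]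
  rw [shiftedBeta, setIntegral_Ioo_comp_mobius hb1, ← MeasureTheory.integral_const_mul]
  refine setIntegral_congr_fun measurableSet_Ioo fun z hz => ?_
  have hz0 : 0 < z := hz.1
  have hz1 : 0 < 1 - z := sub_pos.2 hz.2
  have hD := one_sub_mul_pos hb (Ioo_subset_Icc_self hz)
  have hD' : 1 + (1 - b - 1) * z = 1 - b * z := by ring
  have h1 : 1 - (1 - b) * z / (1 - b * z) = (1 - z) / (1 - b * z) := by
    rw [eq_div_iff hD.ne', sub_mul, div_mul_cancel₀ _ hD.ne']
    ring
  have h2 : (1 - b) * z / (1 - b * z) + (1 - b) / (1 + b)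
      = (1 - b) * (1 + z) / ((1 + b) * (1 - b * z)) := by
    field_simp
    ring
  rw [hD', h1, h2, show 1 - b ^ 2 = (1 - b) * (1 + b) by ring]
  refine Real.log_injOn_pos (mem_Ioi.2 (by positivity)) (mem_Ioi.2 (by positivity)) ?_
  simp (disch := positivity) only [log_mul, log_div, log_inv, log_rpow, log_pow]
  ring

theorem integrableOn_mobius_kernel {q β : ℝ} (hq : q ∈ Ioo (0 : ℝ) 1) (hβ : β ∈ Ioo (-1 : ℝ) 1) :
    IntegrableOn (fun z => z ^ (2 * q - 1) * (1 - z) ^ (-q) * ((1 + z) ^ (-q) * (1 - β * z)⁻¹))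
      (Ioo 0 1) :=
  integrableOn_Ioo_rpow_mul_one_sub_rpow_mul (by linarith [hq.1]) (by linarith [hq.2])
    (((continuousOn_const.add continuousOn_id).rpow_const fun z hz => Or.inl
        (by simp only [Pi.add_apply, id]; linarith [hz.1])).mul
      ((continuousOn_const.sub (continuousOn_const.mul continuousOn_id)).inv₀
        fun z hz => (one_sub_mul_pos hβ hz).ne'))

theorem shiftedBeta_add_shiftedBeta_inv {q a : ℝ} (hq : q ∈ Ioo (0 : ℝ) 1) (ha : 0 < a) :
    shiftedBeta q a + shiftedBeta q a⁻¹ = betaIoo q (1 - q) := by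
  obtain ⟨b, hb, rfl⟩ : ∃ b ∈ Ioo (-1 : ℝ) 1, (1 - b) / (1 + b) = a :=
    ⟨(1 - a) / (1 + a), ⟨by rw [lt_div_iff₀ (by linarith)]; linarith,
      by rw [div_lt_one (by linarith)]; linarith⟩, by field_simp; ring⟩
  rw [inv_div]
  have hnb : -b ∈ Ioo (-1 : ℝ) 1 := ⟨by linarith [hb.2], by linarith [hb.1]⟩
  have hb2 : 0 < 1 - b ^ 2 := by nlinarith [hb.1, hb.2]
  rw [show (1 + b) / (1 - b) = (1 - -b) / (1 + -b) by ring, shiftedBeta_eq_mobius hb,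
    shiftedBeta_eq_mobius hnb, neg_sq, ← mul_add,
    ← integral_add (integrableOn_mobius_kernel hq hb) (integrableOn_mobius_kernel hq hnb),
    setIntegral_congr_fun measurableSet_Ioo (g := fun z => 2 * (z ^ (2 * q - 1) *
      (1 - z ^ 2) ^ ((1 - q) - 1) * (1 - b ^ 2 * z ^ 2) ^ (-(q + (1 - q))))),
    MeasureTheory.integral_const_mul, setIntegral_Ioo_sq_euler_transform (sub_pos.1 hb2),
    rpow_neg hb2.le]
  · field_simp
  · intro z hz
    beta_reduce
    have h1 := one_sub_mul_pos hb (Ioo_subset_Icc_self hz)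
    have h2 := one_sub_mul_pos hnb (Ioo_subset_Icc_self hz)
    have hz1 : 0 < 1 - z := sub_pos.2 hz.2
    have hz2 : 0 < 1 + z := by linarith [hz.1]
    rw [show (1 - q) - 1 = -q by ring, show -(q + (1 - q)) = (-1 : ℝ) by ring, rpow_neg_one,
      show 1 - z ^ 2 = (1 - z) * (1 + z) by ring, mul_rpow hz1.le hz2.le,
      show 1 - b ^ 2 * z ^ 2 = (1 - b * z) * (1 - -b * z) by ring]
    have hsum : (1 - b * z)⁻¹ + (1 - -b * z)⁻¹ = 2 * ((1 - b * z) * (1 - -b * z))⁻¹ := by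
      rw [inv_add_inv h1.ne' h2.ne']
      ring
    linear_combination (z ^ (2 * q - 1) * (1 - z) ^ (-q) * (1 + z) ^ (-q)) * hsum

theorem shiftedBeta_zero (q : ℝ) : shiftedBeta q 0 = betaIoo q (1 - q) := by
  refine setIntegral_congr_fun measurableSet_Ioo fun v hv => ?_
  rw [add_zero, mul_rpow (sub_pos.2 hv.2).le hv.1.le, mul_left_comm, ← rpow_add hv.1]
  ring_nf

theorem setIntegral_one_sub_rpow_half_mul_add_eq_shiftedBeta {p : ℝ} (hp : 0 < p) (c : ℝ) :
    ∫ y in Ioo (0 : ℝ) 1, ((1 - y ^ (p / 2)) * (y ^ (p / 2) + c)) ^ (-(1 / p)) =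
      2 / p * shiftedBeta (1 / p) c := by
  rw [setIntegral_Ioo_comp_rpow (half_pos hp) fun v => ((1 - v) * (v + c)) ^ (-(1 / p)), inv_div,
    shiftedBeta, mul_one_div]

theorem rpow_eq_rpow_half_sq {x : ℝ} (hx : 0 ≤ x) (p : ℝ) : x ^ p = (x ^ (p / 2)) ^ 2 := by
  rw [← rpow_natCast, ← rpow_mul hx]
  ring_nf

theorem Rfun_half {m : ℝ} (hm : 0 ≤ m) (p : ℝ) : Rfun m p (p / 2) = 1 - m ^ (p / 2) := by
  rw [Rfun, rpow_eq_rpow_half_sq hm, div_eq_iff (by positivity)]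
  ring

theorem Hfun_zero_half_eq_shiftedBeta {p : ℝ} (hp : 0 < p) :
    Hfun 0 p (p / 2) = 2 / p * shiftedBeta (1 / p) 0 := by
  simp only [← setIntegral_one_sub_rpow_half_mul_add_eq_shiftedBeta hp, Hfun, zero_mul,
    intervalIntegral.integral_zero, add_zero]
  rw [Rfun_half le_rfl, intervalIntegral.integral_of_le zero_le_one, integral_Ioc_eq_integral_Ioo]
  refine setIntegral_congr_fun measurableSet_Ioo fun y hy => ?_
  rw [rpow_eq_rpow_half_sq hy.1.le p, zero_rpow (by positivity)]
  ring_nf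

theorem Hfun_half_eq_shiftedBeta {m p : ℝ} (hm : 0 < m) (hp : 0 < p) :
    Hfun m p (p / 2) =
      2 / p * (shiftedBeta (1 / p) (m ^ (p / 2)) + shiftedBeta (1 / p) (m ^ (p / 2))⁻¹) := by
  have ha : 0 < m ^ (p / 2) := rpow_pos_of_pos hm _
  rw [mul_add, ← setIntegral_one_sub_rpow_half_mul_add_eq_shiftedBeta hp,
    ← setIntegral_one_sub_rpow_half_mul_add_eq_shiftedBeta hp, Hfun, Rfun_half hm.le,
    intervalIntegral.integral_of_le zero_le_one, intervalIntegral.integral_of_le zero_le_one,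
    integral_Ioc_eq_integral_Ioo, integral_Ioc_eq_integral_Ioo]
  congr 1 <;> refine setIntegral_congr_fun measurableSet_Ioo fun y hy => ?_
  · rw [rpow_eq_rpow_half_sq hy.1.le p]
    ring_nf
  · have hs : y ^ (p / 2) < 1 := rpow_lt_one hy.1.le hy.2 (half_pos hp)
    have hy0 : 0 < y ^ (p / 2) := rpow_pos_of_pos hy.1 _
    have hfactor : 1 - (1 - m ^ (p / 2)) * (1 + m ^ (p / 2) * y ^ (p / 2)) - m ^ p * y ^ p =
        m ^ p * ((1 - y ^ (p / 2)) * (y ^ (p / 2) + (m ^ (p / 2))⁻¹)) := by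
      rw [rpow_eq_rpow_half_sq hm.le p, rpow_eq_rpow_half_sq hy.1.le p]
      field_simp
      ring
    rw [hfactor, mul_rpow (by positivity) (mul_pos (sub_pos.2 hs) (by positivity)).le,
      ← rpow_mul hm.le, mul_neg, mul_one_div_cancel hp.ne', rpow_neg_one, ← mul_assoc,
      mul_inv_cancel₀ hm.ne', one_mul]

theorem pip_div_rpow_eq_betaIoo {p : ℝ} (hp : 1 < p) :
    pip p / (p - 1) ^ (1 / p) = 2 / p * betaIoo (1 / p) (1 - 1 / p) := by
  have hp0 : 0 < p := by linarith
  have hK : 0 < (p - 1) ^ (1 / p) := rpow_pos_of_pos (by linarith) _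
  have hKp : ((p - 1) ^ (1 / p)) ^ p = p - 1 := by
    rw [← rpow_mul (by linarith), one_div_mul_cancel hp0.ne', rpow_one]
  have hscale : ∫ t in (0 : ℝ)..(p - 1) ^ (1 / p), (1 - t ^ p / (p - 1)) ^ (-(1 / p)) =
      (p - 1) ^ (1 / p) * ∫ x in (0 : ℝ)..1, (1 - x ^ p) ^ (-(1 / p)) := by
    have h := intervalIntegral.smul_integral_comp_mul_left
      (fun t => (1 - t ^ p / (p - 1)) ^ (-(1 / p))) ((p - 1) ^ (1 / p)) (a := 0) (b := 1)
    rw [mul_zero, mul_one, smul_eq_mul] at h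
    rw [← h]
    congr 1
    refine intervalIntegral.integral_congr fun x hx => ?_
    rw [uIcc_of_le zero_le_one] at hx
    rw [mul_rpow hK.le hx.1, hKp, mul_div_cancel_left₀ _ (by linarith)]
  have hbeta : ∫ x in (0 : ℝ)..1, (1 - x ^ p) ^ (-(1 / p)) = p⁻¹ * betaIoo (1 / p) (1 - 1 / p) := by
    rw [intervalIntegral.integral_of_le zero_le_one, integral_Ioc_eq_integral_Ioo,
      setIntegral_Ioo_comp_rpow hp0 fun u => (1 - u) ^ (-(1 / p)), betaIoo, one_div,
      sub_sub_cancel_left]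
  rw [pip, hscale, hbeta]
  field_simp

/-- `m ↦ H(m,p,p/2)` is the constant `π_p/(p-1)^{1/p}` on `[0,1]`. -/
theorem Hfun_const_at_half (p : ℝ) (hp : 2 ≤ p) :
    ∀ m ∈ Icc (0 : ℝ) 1, Hfun m p (p / 2) = pip p / (p - 1) ^ (1 / p) := by
  intro m hm
  have hp0 : 0 < p := by linarith
  have hq : 1 / p ∈ Ioo (0 : ℝ) 1 := ⟨by positivity, (div_lt_one hp0).2 (by linarith)⟩
  rw [pip_div_rpow_eq_betaIoo (by linarith)]
  rcases hm.1.eq_or_lt with rfl | hm0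
  · rw [Hfun_zero_half_eq_shiftedBeta hp0, shiftedBeta_zero]
  · rw [Hfun_half_eq_shiftedBeta hm0 hp0,
      shiftedBeta_add_shiftedBeta_inv hq (rpow_pos_of_pos hm0 _)]
end
end
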